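/- Let G be a factorizable finite simple graph and H a factor-component of G. Let S ⊆ V(H) be a union of equivalence classes of the relation ~ on V(H), and let K1, …, Kl (l ≥ 1) be connected components of the subgraph of G induced by the union of the vertex sets of the members of up(H) such that Γ_G(V(Ki)) ∩ V(H) ⊆ S for each i = 1, …, l. Then G[V(K1) ∪ ⋯ ∪ V(Kl) ∪ S]/S — the induced subgraph of G on V(K1) ∪ ⋯ ∪ V(Kl) ∪ S with S contracted to a single vertex, deleting loops and parallel edges — is factor-critical. -/

import Mathlib

open SimpleGraph

variable {V : Type*}

/-- A set of edges is pairwise vertex-disjoint. -/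
def DisjointEdges (N : Set (Sym2 V)) : Prop :=
  ∀ e ∈ N, ∀ f ∈ N, e ≠ f → ∀ x : V, x ∈ e → x ∉ f

/-- `M` is a matching of `G`: a set of pairwise vertex-disjoint edges of `G`. -/
def IsMatchingSet (G : SimpleGraph V) (M : Set (Sym2 V)) : Prop :=
  M ⊆ G.edgeSet ∧ DisjointEdges M

/-- `M` is a perfect matching of `G`: a matching covering every vertex. -/
def IsPerfectMatchingSet (G : SimpleGraph V) (M : Set (Sym2 V)) : Prop :=
  IsMatchingSet G M ∧ ∀ v : V, ∃ e ∈ M, v ∈ e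

/-- `M` is a near-perfect matching of `G` whose unique exposed vertex is `v`. -/
def IsNearPerfectMatchingSet (G : SimpleGraph V) (M : Set (Sym2 V)) (v : V) : Prop :=
  IsMatchingSet G M ∧ (∀ e ∈ M, v ∉ e) ∧ ∀ u : V, u ≠ v → ∃ e ∈ M, u ∈ e

/-- The induced subgraph `G[X]` has a perfect matching. -/
def HasPMOn (G : SimpleGraph V) (X : Set V) : Prop :=
  ∃ M : Set (Sym2 V), IsMatchingSet G M ∧ (∀ e ∈ M, ∀ x : V, x ∈ e → x ∈ X) ∧
    ∀ v ∈ X, ∃ e ∈ M, v ∈ e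

/-- `G` is factorizable: it has a perfect matching. -/
def Factorizable (G : SimpleGraph V) : Prop :=
  ∃ M : Set (Sym2 V), IsPerfectMatchingSet G M

/-- `G` is factor-critical: deleting any single vertex leaves a factorizable graph. -/
def FactorCritical (G : SimpleGraph V) : Prop :=
  ∀ v : V, HasPMOn G {v}ᶜ

/-- A walk is `M`-alternating: its edges outside `M` are pairwise vertex-disjoint. -/
def MAlternating (M : Set (Sym2 V)) {G : SimpleGraph V} {u v : V} (p : G.Walk u v) : Prop :=
  ∀ e ∈ p.edges, ∀ f ∈ p.edges, e ∉ M → f ∉ M → e ≠ f → ∀ x : V, x ∈ e → x ∉ f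

/-- An `M`-saturated path: a path with an odd number of edges such that `M ∩ E(P)`
is a perfect matching of `P`. -/
def IsSaturatedPath (M : Set (Sym2 V)) {G : SimpleGraph V} {u v : V} (p : G.Walk u v) : Prop :=
  p.IsPath ∧ Odd p.length ∧ ∀ x ∈ p.support, ∃ e ∈ p.edges, e ∈ M ∧ x ∈ e

/-- An `M`-exposed path: a path with an odd number of edges such that `E(P) \ M`
is a perfect matching of `P`. -/
def IsExposedPath (M : Set (Sym2 V)) {G : SimpleGraph V} {u v : V} (p : G.Walk u v) : Prop :=
  p.IsPath ∧ Odd p.length ∧ ∀ x ∈ p.support, ∃ e ∈ p.edges, e ∉ M ∧ x ∈ e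

/-- An `M`-balanced path from `u` to `v`: an `M`-alternating path with an even number
of edges whose first edge (the one incident with `u`) belongs to `M`; a trivial
one-vertex path is `M`-balanced. -/
def IsBalancedPath (M : Set (Sym2 V)) {G : SimpleGraph V} {u v : V} (p : G.Walk u v) : Prop :=
  p.IsPath ∧ Even p.length ∧ MAlternating M p ∧ ∀ e ∈ p.edges.head?, e ∈ M

/-- An edge of `G` is allowed if it lies in some perfect matching of `G`. -/
def Allowed (G : SimpleGraph V) (e : Sym2 V) : Prop :=
  ∃ M : Set (Sym2 V), IsPerfectMatchingSet G M ∧ e ∈ M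

/-- The spanning subgraph of `G` formed by its allowed edges. -/
def allowedSubgraph (G : SimpleGraph V) : SimpleGraph V where
  Adj u v := G.Adj u v ∧ Allowed G s(u, v)
  symm := by
    constructor
    intro u v h
    refine ⟨h.1.symm, ?_⟩
    rw [Sym2.eq_swap]
    exact h.2
  loopless := ⟨fun v h => G.loopless.irrefl v h.1⟩

/-- `C` is (the vertex set of) a factor-component of `G`: a connected component of the
spanning subgraph of `G` formed by the allowed edges (the factor-component itself being
the induced subgraph `G[C]`). -/
def IsFactorComponent (G : SimpleGraph V) (C : Set V) : Prop :=
  ∃ c : (allowedSubgraph G).ConnectedComponent, C = c.supp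

/-- `G` is elementary: it is factorizable and has exactly one factor-component. -/
def Elementary (G : SimpleGraph V) : Prop :=
  Factorizable G ∧ (allowedSubgraph G).Connected

/-- `X` is a separating set of `G`. -/
def Separating (G : SimpleGraph V) (X : Set V) : Prop :=
  ∀ C : Set V, IsFactorComponent G C → C ⊆ X ∨ Disjoint C X

/-- The contraction `G[X]/S`: the induced subgraph of `G` on `X` with `S` contracted
to a single vertex (the vertex `none`), deleting loops and parallel edges. -/
def contractOn (G : SimpleGraph V) (X S : Set V) : SimpleGraph (Option ↥(X \ S)) where
  Adj a b :=
    match a, b with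
    | some x, some y => G.Adj x.1 y.1
    | some x, none => ∃ s ∈ S, G.Adj x.1 s
    | none, some y => ∃ s ∈ S, G.Adj y.1 s
    | none, none => False
  symm := by
    constructor
    rintro (_ | x) (_ | y) h
    · exact h.elim
    · exact h
    · exact h
    · exact h.symm
  loopless := by
    constructor
    rintro (_ | x) h
    · exact h.elim
    · exact G.loopless.irrefl x.1 h

/-- `X` is a critical-inducing set for the factor-component (with vertex set) `C1`:
a separating set containing `C1` such that `G[X]/C1` is factor-critical. -/
def CriticalInducing (G : SimpleGraph V) (C1 X : Set V) : Prop :=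
  Separating G X ∧ C1 ⊆ X ∧ FactorCritical (contractOn G X C1)

/-- `C1 ⊵ C2`: there is a critical-inducing set for `C1` to `C2`. -/
def Yield (G : SimpleGraph V) (C1 C2 : Set V) : Prop :=
  ∃ X : Set V, CriticalInducing G C1 X ∧ C2 ⊆ X

/-- `u ∼ v`: `u = v` or `G - u - v` has no perfect matching. -/
def SimRel (G : SimpleGraph V) (u v : V) : Prop :=
  u = v ∨ ¬ HasPMOn G (({u, v} : Set V)ᶜ)

/-- An `M`-ear relative to the vertex set `X`: a path whose two end vertices lie in `X`
and whose internal vertices do not (or a cycle with exactly one vertex in `X`), such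
that the ear minus `X` is an `M`-saturated path. -/
def IsMEar (G : SimpleGraph V) (M : Set (Sym2 V)) (X : Set V) {u v : V}
    (p : G.Walk u v) : Prop :=
  u ∈ X ∧ v ∈ X ∧ ((∃ h : u = v, (p.copy rfl h.symm).IsCycle) ∨ (u ≠ v ∧ p.IsPath)) ∧
  ∃ (x y : V) (hux : G.Adj u x) (q : G.Walk x y) (hyv : G.Adj y v),
    p = SimpleGraph.Walk.cons hux (q.concat hyv) ∧
    IsSaturatedPath M q ∧ ∀ w ∈ q.support, w ∉ X

/-- An `M`-ear relative to `X` through (the factor-component with vertex set) `C`: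
some internal vertex of the ear lies in `C`. -/
def IsMEarThrough (G : SimpleGraph V) (M : Set (Sym2 V)) (X C : Set V) {u v : V}
    (p : G.Walk u v) : Prop :=
  IsMEar G M X p ∧ ∃ w ∈ p.support, w ∉ X ∧ w ∈ C

/-- An `M`-ear sequence `(H 0, …, H k)` of pairwise distinct factor-components,
where for each `i` there is an `M`-ear relative to `H i` through `H (i+1)`. -/
def IsMEarSequence (G : SimpleGraph V) (M : Set (Sym2 V)) (k : ℕ)
    (H : Fin (k + 1) → Set V) : Prop :=
  (∀ i, IsFactorComponent G (H i)) ∧ Function.Injective H ∧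
  ∀ i : Fin k, ∃ (u v : V) (p : G.Walk u v),
    IsMEarThrough G M (H i.castSucc) (H i.succ) p

/-!
Write `T` for the union of the `Kᵢ`. Members of `up(H)` are disjoint from `V(H)` and `T` is a
union of factor-components, so a perfect matching of `G` restricts to `T`; this handles the
deletion of the contracted vertex. For `x ∈ Kᵢ`, pick a critical-inducing set `X` for `H`
containing `x`. A perfect matching of `G[X]/H - x` matches the contracted vertex to some `y`
adjacent to `s ∈ V(H)` and perfectly matches `X ∖ V(H) - x - y`. Its edges cannot leave
`A = X ∩ V(Kᵢ)`, since they stay inside `⋃ up(H)` where `Kᵢ` is a component; and `A` is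
separating, hence has even order, so parity forces `y ∈ A`. Then `s ∈ S` by
`Γ(Kᵢ) ∩ V(H) ⊆ S`, and the matching of `A - x - y`, the edge `ys` and a perfect matching of
`T ∖ A` give the required perfect matching of `G[T ∪ S]/S - x`.
-/

section Matchings

variable {W : Type*} {G : SimpleGraph V}

lemma IsMatchingSet.mono {M N : Set (Sym2 V)} (hM : IsMatchingSet G M) (hNM : N ⊆ M) :
    IsMatchingSet G N :=
  ⟨hNM.trans hM.1, fun e he f hf => hM.2 e (hNM he) f (hNM hf)⟩

lemma IsMatchingSet.hasPMOn {M : Set (Sym2 V)} {B : Set V} (hM : IsMatchingSet G M)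
    (hB : ∀ v ∈ B, ∃ e ∈ M, v ∈ e ∧ ∀ x ∈ e, x ∈ B) : HasPMOn G B := by
  refine ⟨{e ∈ M | ∀ x ∈ e, x ∈ B}, hM.mono fun e he => he.1, fun e he => he.2, fun v hv => ?_⟩
  obtain ⟨e, he, hve, heB⟩ := hB v hv
  exact ⟨e, ⟨he, heB⟩, hve⟩

lemma hasPMOn_pair {a b : V} (h : G.Adj a b) : HasPMOn G {a, b} := by
  refine ⟨{s(a, b)}, ⟨by simpa using h, ?_⟩, ?_, ?_⟩
  · intro e he f hf hne
    exact absurd (he.trans hf.symm) hne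
  · rintro e rfl x hx
    simpa using hx
  · rintro v hv
    exact ⟨s(a, b), rfl, by simpa using hv⟩

lemma HasPMOn.union {A B : Set V} (hA : HasPMOn G A) (hB : HasPMOn G B) (hAB : Disjoint A B) :
    HasPMOn G (A ∪ B) := by
  obtain ⟨MA, hMA, hMAin, hMAcov⟩ := hA
  obtain ⟨MB, hMB, hMBin, hMBcov⟩ := hB
  refine ⟨MA ∪ MB, ⟨Set.union_subset hMA.1 hMB.1, ?_⟩, ?_, ?_⟩
  · rintro e (he | he) f (hf | hf) hne x hxe hxf
    · exact hMA.2 e he f hf hne x hxe hxf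
    · exact Set.disjoint_left.1 hAB (hMAin e he x hxe) (hMBin f hf x hxf)
    · exact Set.disjoint_left.1 hAB (hMAin f hf x hxf) (hMBin e he x hxe)
    · exact hMB.2 e he f hf hne x hxe hxf
  · rintro e (he | he) x hx
    exacts [Or.inl (hMAin e he x hx), Or.inr (hMBin e he x hx)]
  · rintro v (hv | hv)
    · obtain ⟨e, he, hve⟩ := hMAcov v hv
      exact ⟨e, Or.inl he, hve⟩
    · obtain ⟨e, he, hve⟩ := hMBcov v hv
      exact ⟨e, Or.inr he, hve⟩

lemma HasPMOn.restrict {B D : Set V} (h : HasPMOn G B) (hDB : D ⊆ B)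
    (hD : ∀ z ∈ D, ∀ w ∈ B, G.Adj z w → w ∈ D) : HasPMOn G D := by
  obtain ⟨M, hM, hMin, hMcov⟩ := h
  refine hM.hasPMOn fun v hv => ?_
  obtain ⟨e, he, hve⟩ := hMcov v (hDB hv)
  obtain ⟨w, rfl⟩ := Sym2.mem_iff_exists.1 hve
  have hwD := hD v hv w (hMin _ he w (Sym2.mem_mk_right v w)) (hM.1 he)
  refine ⟨s(v, w), he, hve, fun x hx => ?_⟩
  rcases Sym2.mem_iff.1 hx with rfl | rfl
  exacts [hv, hwD]

lemma HasPMOn.exists_adj_hasPMOn_sdiff_pair {B : Set V} {b : V} (h : HasPMOn G B) (hb : b ∈ B) :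
    ∃ c ∈ B, G.Adj b c ∧ HasPMOn G (B \ {b, c}) := by
  obtain ⟨M, hM, hMin, hMcov⟩ := h
  obtain ⟨e, he, hbe⟩ := hMcov b hb
  obtain ⟨c, rfl⟩ := Sym2.mem_iff_exists.1 hbe
  refine ⟨c, hMin _ he c (Sym2.mem_mk_right b c), hM.1 he, hM.hasPMOn fun v hv => ?_⟩
  obtain ⟨f, hf, hvf⟩ := hMcov v hv.1
  have hfe : f ≠ s(b, c) := by
    rintro rfl
    exact hv.2 (by simpa using hvf)
  refine ⟨f, hf, hvf, fun x hx => ⟨hMin f hf x hx, ?_⟩⟩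
  rintro (rfl | rfl)
  · exact hM.2 f hf _ he hfe x hx (Sym2.mem_mk_left x c)
  · exact hM.2 f hf _ he hfe x hx (Sym2.mem_mk_right b x)

lemma HasPMOn.even_ncard [Finite V] {B : Set V} (h : HasPMOn G B) : Even B.ncard := by
  induction hn : B.ncard using Nat.strong_induction_on generalizing B with
  | _ n ih =>
  rcases B.eq_empty_or_nonempty with rfl | ⟨b, hb⟩
  · simp [← hn]
  obtain ⟨c, hc, hbc, h'⟩ := h.exists_adj_hasPMOn_sdiff_pair hb
  have hpair : ({b, c} : Set V) ⊆ B := Set.insert_subset hb (Set.singleton_subset_iff.2 hc)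
  have hcard : (B \ {b, c}).ncard + 2 = n := by
    have := Set.ncard_le_ncard hpair
    rw [Set.ncard_sdiff hpair, Set.ncard_pair hbc.ne] at *
    omega
  obtain ⟨k, hk⟩ := ih _ (by omega) h' rfl
  exact ⟨k + 1, by omega⟩

lemma HasPMOn.mem_of_hasPMOn_sdiff_pair [Finite V] {A : Set V} {x y : V} (hA : HasPMOn G A)
    (hx : x ∈ A) (h : HasPMOn G (A \ {x, y})) : y ∈ A := by
  by_contra hy
  rw [Set.pair_comm, Set.sdiff_insert_of_notMem hy] at h
  exact Nat.even_add_one.1 (Set.ncard_sdiff_singleton_add_one hx ▸ hA.even_ncard) h.even_ncard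

lemma HasPMOn.map {G' : SimpleGraph W} {B : Set V} (h : HasPMOn G B) (f : G →g G')
    (hf : Function.Injective f) : HasPMOn G' (f '' B) := by
  obtain ⟨M, hM, hMin, hMcov⟩ := h
  refine ⟨Sym2.map f '' M, ⟨?_, ?_⟩, ?_, ?_⟩
  · rintro _ ⟨e, he, rfl⟩
    exact f.map_mem_edgeSet (hM.1 he)
  · rintro _ ⟨e, he, rfl⟩ _ ⟨e', he', rfl⟩ hne x hx hx'
    obtain ⟨a, ha, rfl⟩ := Sym2.mem_map.1 hx
    obtain ⟨a', ha', haa'⟩ := Sym2.mem_map.1 hx'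
    exact hM.2 e he e' he' (fun h => hne (h ▸ rfl)) a ha (hf haa' ▸ ha')
  · rintro _ ⟨e, he, rfl⟩ _ hx
    obtain ⟨a, ha, rfl⟩ := Sym2.mem_map.1 hx
    exact ⟨a, hMin e he a ha, rfl⟩
  · rintro _ ⟨v, hv, rfl⟩
    obtain ⟨e, he, hve⟩ := hMcov v hv
    exact ⟨_, ⟨e, he, rfl⟩, Sym2.mem_map.2 ⟨v, hve, rfl⟩⟩

lemma HasPMOn.comap {G' : SimpleGraph W} {B : Set W} (h : HasPMOn G' B) (f : G ↪g G')
    (hB : B ⊆ Set.range f) : HasPMOn G (f ⁻¹' B) := by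
  obtain ⟨M, hM, hMin, hMcov⟩ := h
  have hmem : ∀ {e : Sym2 V} {v : V}, v ∈ e → f v ∈ Sym2.map f e :=
    fun hv => Sym2.mem_map.2 ⟨_, hv, rfl⟩
  refine ⟨Sym2.map f ⁻¹' M, ⟨fun e he => f.map_mem_edgeSet_iff.1 (hM.1 he), ?_⟩, ?_, ?_⟩
  · intro e he e' he' hne x hx hx'
    exact hM.2 _ he _ he' ((Sym2.map.injective f.injective).ne hne) (f x) (hmem hx) (hmem hx')
  · intro e he x hx
    exact hMin _ he (f x) (hmem hx)
  · intro v hv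
    obtain ⟨e, he, hve⟩ := hMcov (f v) hv
    obtain ⟨w, rfl⟩ := Sym2.mem_iff_exists.1 hve
    obtain ⟨a, ha⟩ := hB (hMin _ he w (Sym2.mem_mk_right _ w))
    exact ⟨s(v, a), by simpa [ha] using he, Sym2.mem_mk_left v a⟩

end Matchings

section Contraction

variable {G : SimpleGraph V} {X S : Set V}

def contractOnSomeEmbedding (G : SimpleGraph V) (X S : Set V) :
    G.induce (X \ S) ↪g contractOn G X S where
  toFun := some
  inj' := Option.some_injective _
  map_rel_iff' := Iff.rfl

@[simp]
lemma contractOnSomeEmbedding_apply (G : SimpleGraph V) (X S : Set V) (a : ↥(X \ S)) :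
    contractOnSomeEmbedding G X S a = some a :=
  rfl

lemma HasPMOn.image_some_contractOn {B : Set V} (h : HasPMOn G B) (hB : B ⊆ X \ S) :
    HasPMOn (contractOn G X S) (some '' (Subtype.val ⁻¹' B)) :=
  (h.comap (Embedding.induce (X \ S)) fun v hv => ⟨⟨v, hB hv⟩, rfl⟩).map
    (contractOnSomeEmbedding G X S).toHom (Option.some_injective _)

lemma hasPMOn_contractOn_compl_none (h : HasPMOn G (X \ S)) :
    HasPMOn (contractOn G X S) {none}ᶜ := by
  have := h.image_some_contractOn subset_rfl
  rwa [Subtype.coe_preimage_self, Set.image_univ,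
    ← (Set.isCompl_range_some_none _).symm.compl_eq] at this

lemma hasPMOn_contractOn_compl_some {x y : ↥(X \ S)} {s : V} (hs : s ∈ S) (hys : G.Adj y s)
    (hxy : x ≠ y) (h : HasPMOn G ((X \ S) \ {x.1, y.1})) :
    HasPMOn (contractOn G X S) {some x}ᶜ := by
  have hpair : HasPMOn (contractOn G X S) {none, some y} := hasPMOn_pair ⟨s, hs, hys⟩
  convert hpair.union (h.image_some_contractOn Set.sdiff_subset) ?_
  · have hxy' : x.1 ≠ y.1 := Subtype.val_injective.ne hxy
    ext (_ | a)
    · simp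
    · grind [Subtype.ext_iff]
  · simp

lemma FactorCritical.exists_adj_hasPMOn_sdiff_pair (h : FactorCritical (contractOn G X S))
    {x : V} (hx : x ∈ X \ S) :
    ∃ y ∈ X \ S, y ≠ x ∧ (∃ s ∈ S, G.Adj y s) ∧ HasPMOn G ((X \ S) \ {x, y}) := by
  obtain ⟨_ | y, hy, hadj, hPM⟩ :=
    (h (some ⟨x, hx⟩)).exists_adj_hasPMOn_sdiff_pair (b := none) (by simp)
  · exact hadj.elim
  refine ⟨y, y.2, ?_, hadj, ?_⟩
  · simpa [Subtype.ext_iff] using hy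
  convert (hPM.comap (contractOnSomeEmbedding G X S) ?_).map (Embedding.induce _).toHom
    Subtype.val_injective
  · ext v
    simp [Subtype.ext_iff, and_comm, and_assoc]
  · rintro (_ | a) ha
    · exact (ha.2 (Or.inl rfl)).elim
    · exact ⟨a, rfl⟩

end Contraction

section FactorComponents

variable {G : SimpleGraph V}

lemma IsFactorComponent.eq_or_disjoint {C D : Set V} (hC : IsFactorComponent G C)
    (hD : IsFactorComponent G D) : C = D ∨ Disjoint C D := by
  obtain ⟨c, rfl⟩ := hC
  obtain ⟨d, rfl⟩ := hD
  rcases eq_or_ne c d with rfl | hcd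
  · exact Or.inl rfl
  · exact Or.inr (SimpleGraph.pairwise_disjoint_supp_connectedComponent _ hcd)

lemma Separating.mem_of_adj {X : Set V} {z w : V} (hX : Separating G X) (hz : z ∈ X)
    (h : (allowedSubgraph G).Adj z w) : w ∈ X := by
  rcases hX _ ⟨_, rfl⟩ with hsub | hdisj
  · exact hsub ((SimpleGraph.ConnectedComponent.connectedComponentMk_eq_of_adj h).symm)
  · exact absurd hz (Set.disjoint_left.1 hdisj rfl)

lemma separating_of_forall_adj {X : Set V}
    (hX : ∀ z ∈ X, ∀ w, (allowedSubgraph G).Adj z w → w ∈ X) : Separating G X := by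
  have hwalk : ∀ {a b : V}, (allowedSubgraph G).Walk a b → a ∈ X → b ∈ X := by
    intro a b p
    induction p with
    | nil => exact id
    | cons h _ ih => exact fun ha => ih (hX _ ha _ h)
  rintro _ ⟨c, rfl⟩
  refine or_iff_not_imp_right.2 fun hc => ?_
  obtain ⟨z, hzc, hzX⟩ := Set.not_disjoint_iff.1 hc
  intro w hwc
  exact hwalk (SimpleGraph.ConnectedComponent.exact (hzc.trans hwc.symm)).some hzX

lemma Separating.inter {X Y : Set V} (hX : Separating G X) (hY : Separating G Y) :
    Separating G (X ∩ Y) :=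
  separating_of_forall_adj fun _ hz _ h => ⟨hX.mem_of_adj hz.1 h, hY.mem_of_adj hz.2 h⟩

lemma Separating.sdiff {X Y : Set V} (hX : Separating G X) (hY : Separating G Y) :
    Separating G (X \ Y) :=
  separating_of_forall_adj fun _ hz _ h =>
    ⟨hX.mem_of_adj hz.1 h, fun hw => hz.2 (hY.mem_of_adj hw h.symm)⟩

lemma Separating.iUnion {ι : Sort*} {X : ι → Set V} (hX : ∀ i, Separating G (X i)) :
    Separating G (⋃ i, X i) :=
  separating_of_forall_adj fun _ hz _ h =>
    let ⟨i, hi⟩ := Set.mem_iUnion.1 hz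
    Set.mem_iUnion.2 ⟨i, (hX i).mem_of_adj hi h⟩

lemma IsFactorComponent.separating {C : Set V} (hC : IsFactorComponent G C) : Separating G C := by
  obtain ⟨c, rfl⟩ := hC
  exact separating_of_forall_adj fun _ hz _ h =>
    (SimpleGraph.ConnectedComponent.connectedComponentMk_eq_of_adj h).symm.trans hz

lemma separating_sUnion {𝒞 : Set (Set V)} (h𝒞 : ∀ C ∈ 𝒞, IsFactorComponent G C) :
    Separating G (⋃₀ 𝒞) :=
  separating_of_forall_adj fun _ ⟨C, hC, hzC⟩ _ h =>
    ⟨C, hC, (h𝒞 C hC).separating.mem_of_adj hzC h⟩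

lemma Factorizable.hasPMOn_of_separating {X : Set V} (hG : Factorizable G)
    (hX : Separating G X) : HasPMOn G X := by
  obtain ⟨M, hM, hMcov⟩ := hG
  refine hM.hasPMOn fun v hv => ?_
  obtain ⟨e, he, hve⟩ := hMcov v
  obtain ⟨w, rfl⟩ := Sym2.mem_iff_exists.1 hve
  have hwX : w ∈ X := hX.mem_of_adj hv ⟨hM.1 he, M, ⟨hM, hMcov⟩, he⟩
  refine ⟨s(v, w), he, hve, fun x hx => ?_⟩
  rcases Sym2.mem_iff.1 hx with rfl | rfl
  exacts [hv, hwX]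

lemma Factorizable.hasPMOn_sdiff_pair_of_subset {A X : Set V} {x y : V} (hG : Factorizable G)
    (hA : Separating G A) (hX : Separating G X) (hAX : A ⊆ X) (hx : x ∈ A) (hy : y ∈ A)
    (h : HasPMOn G (A \ {x, y})) : HasPMOn G (X \ {x, y}) := by
  have hsplit : X \ {x, y} = A \ {x, y} ∪ X \ A := by
    ext v
    by_cases hvA : v ∈ A
    · have := hAX hvA
      simp_all
    · have : v ≠ x ∧ v ≠ y := ⟨fun h => hvA (h ▸ hx), fun h => hvA (h ▸ hy)⟩
      simp_all
  rw [hsplit]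
  exact h.union (hG.hasPMOn_of_separating (hX.sdiff hA))
    (Set.disjoint_sdiff_right.mono_left Set.sdiff_subset)

lemma mem_image_supp_of_adj {U : Set V} (K : (G.induce U).ConnectedComponent) {z w : V}
    (hz : z ∈ Subtype.val '' K.supp) (hw : w ∈ U) (h : G.Adj z w) :
    w ∈ Subtype.val '' K.supp := by
  obtain ⟨z, hzK, rfl⟩ := hz
  exact ⟨⟨w, hw⟩, (SimpleGraph.ConnectedComponent.connectedComponentMk_eq_of_adj
    (G := G.induce U) (v := z) (w := ⟨w, hw⟩) h).symm.trans hzK, rfl⟩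

lemma Separating.image_supp {U : Set V} (hU : Separating G U)
    (K : (G.induce U).ConnectedComponent) : Separating G (Subtype.val '' K.supp) :=
  separating_of_forall_adj fun _ hz _ h =>
    mem_image_supp_of_adj K hz (hU.mem_of_adj (Set.image_val_subset hz) h) h.1

def up (G : SimpleGraph V) (C0 : Set V) : Set (Set V) :=
  {C | IsFactorComponent G C ∧ Yield G C0 C ∧ C ≠ C0}

lemma separating_sUnion_up {C0 : Set V} : Separating G (⋃₀ up G C0) :=
  separating_sUnion fun _ hC => hC.1

lemma disjoint_sUnion_up {C0 : Set V} (hC0 : IsFactorComponent G C0) :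
    Disjoint (⋃₀ up G C0) C0 :=
  Set.disjoint_sUnion_left.2 fun _ ⟨hC, _, hne⟩ => (hC.eq_or_disjoint hC0).resolve_left hne

lemma CriticalInducing.sdiff_subset_sUnion_up {C0 X : Set V} (hX : CriticalInducing G C0 X) :
    X \ C0 ⊆ ⋃₀ up G C0 := by
  rintro v ⟨hvX, hvC0⟩
  have hv : v ∈ ((allowedSubgraph G).connectedComponentMk v).supp := rfl
  have hsub : _ ⊆ X := (hX.1 _ ⟨_, rfl⟩).resolve_right fun h => Set.disjoint_left.1 h hv hvX
  exact ⟨_, ⟨⟨_, rfl⟩, ⟨X, hX, hsub⟩, fun h => hvC0 (h ▸ hv)⟩, hv⟩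

lemma exists_adj_hasPMOn_sdiff_pair_of_mem_up [Finite V] {C0 : Set V} {x : V}
    (hG : Factorizable G) (hC0 : IsFactorComponent G C0)
    (K : (G.induce (⋃₀ up G C0)).ConnectedComponent) (hx : x ∈ Subtype.val '' K.supp) :
    ∃ y ∈ Subtype.val '' K.supp, y ≠ x ∧ (∃ s ∈ C0, G.Adj y s) ∧
      HasPMOn G (Subtype.val '' K.supp \ {x, y}) := by
  set A := Subtype.val '' K.supp
  have hA : Separating G A := separating_sUnion_up.image_supp K
  have hAC0 : Disjoint A C0 := (disjoint_sUnion_up hC0).mono_left Set.image_val_subset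
  obtain ⟨C, ⟨-, ⟨X, hX, hCX⟩, -⟩, hxC⟩ := Set.image_val_subset hx
  have hxX : x ∈ X \ C0 := ⟨hCX hxC, Set.disjoint_left.1 hAC0 hx⟩
  obtain ⟨y, -, hyx, hys, hPM⟩ := hX.2.2.exists_adj_hasPMOn_sdiff_pair hxX
  have hXA : Separating G (X ∩ A) := hX.1.inter hA
  have hPMXA : HasPMOn G ((X ∩ A) \ {x, y}) := by
    refine hPM.restrict (fun z hz => ⟨⟨hz.1.1, Set.disjoint_left.1 hAC0 hz.1.2⟩, hz.2⟩) ?_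
    exact fun z hz w hw h =>
      ⟨⟨hw.1.1, mem_image_supp_of_adj K hz.1.2 (hX.sdiff_subset_sUnion_up hw.1) h⟩, hw.2⟩
  have hyXA : y ∈ X ∩ A :=
    (hG.hasPMOn_of_separating hXA).mem_of_hasPMOn_sdiff_pair ⟨hxX.1, hx⟩ hPMXA
  exact ⟨y, hyXA.2, hyx, hys,
    hG.hasPMOn_sdiff_pair_of_subset hXA hA Set.inter_subset_right ⟨hxX.1, hx⟩ hyXA hPMXA⟩

end FactorComponents

theorem statement_18_general {V : Type*} [Fintype V] (G : SimpleGraph V) (hG : Factorizable G)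
    (C0 : Set V) (hC0 : IsFactorComponent G C0)
    (S : Set V) (hS : S ⊆ C0)
    (U : Set V)
    (hU : U = ⋃₀ {C : Set V | IsFactorComponent G C ∧ Yield G C0 C ∧ C ≠ C0})
    (l : ℕ) (K : Fin l → (G.induce U).ConnectedComponent)
    (hK : ∀ i, ∀ w ∈ C0, w ∉ Subtype.val '' (K i).supp →
      (∃ x ∈ Subtype.val '' (K i).supp, G.Adj w x) → w ∈ S) :
    FactorCritical (contractOn G ((⋃ i, Subtype.val '' (K i).supp) ∪ S) S) := by
  subst hU
  set T := ⋃ i, Subtype.val '' (K i).supp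
  have hKsep (i : Fin l) : Separating G (Subtype.val '' (K i).supp) :=
    separating_sUnion_up.image_supp (K i)
  have hKC0 (i : Fin l) : Disjoint (Subtype.val '' (K i).supp) C0 :=
    (disjoint_sUnion_up hC0).mono_left Set.image_val_subset
  have hT : Separating G T := Separating.iUnion hKsep
  have hTS : (T ∪ S) \ S = T := by
    rw [Set.union_sdiff_right, sdiff_eq_left]
    exact (Set.disjoint_iUnion_left.2 hKC0).mono_right hS
  rintro (_ | x)
  · refine hasPMOn_contractOn_compl_none ?_
    rw [hTS]
    exact hG.hasPMOn_of_separating hT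
  obtain ⟨i, hxi⟩ := Set.mem_iUnion.1 (hTS.subset x.2)
  obtain ⟨y, hyi, hyx, ⟨s, hsC0, hys⟩, hPM⟩ :=
    exists_adj_hasPMOn_sdiff_pair_of_mem_up hG hC0 (K i) hxi
  have hs : s ∈ S := hK i s hsC0 (Set.disjoint_right.1 (hKC0 i) hsC0) ⟨y, hyi, hys.symm⟩
  refine hasPMOn_contractOn_compl_some (y := ⟨y, hTS.symm.subset (Set.mem_iUnion.2 ⟨i, hyi⟩)⟩)
    hs hys (fun h => hyx (congrArg Subtype.val h).symm) ?_
  convert hG.hasPMOn_sdiff_pair_of_subset (hKsep i) hT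
    (Set.subset_iUnion (fun j => Subtype.val '' (K j).supp) i) hxi hyi hPM using 2

/-- Let `G` be factorizable, `H` a factor-component, `S ⊆ V(H)` a union
of equivalence classes of `∼` on `V(H)`, and `K1, …, Kl` (`l ≥ 1`) connected components of
the subgraph of `G` induced by the union of the vertex sets of members of `up(H)` with
`Γ_G(V(Ki)) ∩ V(H) ⊆ S` for each `i`. Then `G[V(K1) ∪ ⋯ ∪ V(Kl) ∪ S]/S` is
factor-critical. -/
theorem statement_18 {V : Type*} [Fintype V] (G : SimpleGraph V) (hG : Factorizable G)
    (C0 : Set V) (hC0 : IsFactorComponent G C0)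
    (S : Set V) (hS : S ⊆ C0)
    (hSclass : ∀ u ∈ S, ∀ v ∈ C0, SimRel G v u → v ∈ S)
    (U : Set V)
    (hU : U = ⋃₀ {C : Set V | IsFactorComponent G C ∧ Yield G C0 C ∧ C ≠ C0})
    (l : ℕ) (hl : 1 ≤ l) (K : Fin l → (G.induce U).ConnectedComponent)
    (hK : ∀ i, ∀ w ∈ C0, w ∉ Subtype.val '' (K i).supp →
      (∃ x ∈ Subtype.val '' (K i).supp, G.Adj w x) → w ∈ S) :
    FactorCritical (contractOn G ((⋃ i, Subtype.val '' (K i).supp) ∪ S) S) :=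
  statement_18_general G hG C0 hC0 S hS U hU l K hK
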